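/- arXiv:2005.10534 — 2 statements merged into one kernel-verified Lean document; each statement's English description precedes it below -/
import Mathlib

section
/- Suppose that for every pair of equivalent words v ∼ w whose first letters differ and whose parents are not equivalent (v⁻ ≁ w⁻), one has m(v) = m(w̃) for all w̃ ∼ v, and suppose every equivalence of words that agree on an initial segment arises from an equivalence of the suffixes (self-similarity of the relation). Then condition (B2) holds for all words: for every w, either m(w) = m(w̃) for all w̃ ∼ w, or w⁻ ∼ w̃⁻ for all w̃ ∼ w. -/
/-- The multiplicative mass of a word: product of the weights of its letters. -/
def mass {A : Type*} (m : A → ℝ) (w : List A) : ℝ := (w.map m).prod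

/-!
Induction on the word. If `w = a :: u` is not covered by the second alternative of (B2), some
`w̃ ∼ w` has a parent not equivalent to `w⁻`. If `w̃` starts with another letter, the main
hypothesis applies directly. Otherwise `w̃ = a :: ũ` with `u ∼ ũ` and `u⁻ ≁ ũ⁻`, so by induction
all words equivalent to `u` have the mass of `u`: words equivalent to `w` that start with `a` then
have the mass of `w` by self-similarity, and the others by the main hypothesis.
-/

@[simp]
theorem mass_cons {A : Type*} (m : A → ℝ) (a : A) (l : List A) :
    mass m (a :: l) = m a * mass m l := by
  simp [mass]

section WordEquivalence

variable {A : Type*} (m : A → ℝ) (sim : List A → List A → Prop)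

/-- The first alternative of (B2) at `w`. -/
def MassConstOnClass (w : List A) : Prop := ∀ wt, sim w wt → mass m w = mass m wt

/-- The second alternative of (B2) at `w`. -/
def ParentsSimOnClass (w : List A) : Prop := ∀ wt, sim w wt → sim w.dropLast wt.dropLast

variable {m sim}

theorem massConstOnClass_nil (hlen : ∀ v w, sim v w → v.length = w.length) :
    MassConstOnClass m sim [] := by
  intro wt h
  rw [List.eq_nil_of_length_eq_zero (hlen _ _ h).symm]

theorem sim_dropLast_cons_iff (hself : ∀ (u a b : List A), sim (u ++ a) (u ++ b) ↔ sim a b)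
    (a : A) {u u' : List A} (hu : u.length = u'.length) :
    sim (a :: u).dropLast (a :: u').dropLast ↔ sim u.dropLast u'.dropLast := by
  rcases u.eq_nil_or_concat' with rfl | ⟨_, _, rfl⟩
  · rw [List.eq_nil_of_length_eq_zero hu.symm]
    rfl
  · have hu' : u' ≠ [] := by rintro rfl; simp at hu
    rw [List.dropLast_cons_of_ne_nil (by simp), List.dropLast_cons_of_ne_nil hu']
    exact hself [a] _ _

theorem mass_cons_eq_of_massConstOnClass
    (hself : ∀ (u a b : List A), sim (u ++ a) (u ++ b) ↔ sim a b)
    {a : A} {u : List A} (hu : MassConstOnClass m sim u) {v : List A}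
    (hv : sim (a :: u) (a :: v)) : mass m (a :: u) = mass m (a :: v) := by
  rw [mass_cons, mass_cons, hu v ((hself [a] u v).mp hv)]

/-- A word `v ∼ w` starting with another letter than `w` and `wt` is handled by `hmain`,
applied to `(v, wt)` if `v⁻ ∼ w⁻` (then `v⁻ ≁ wt⁻`) and to `(w, v)` otherwise. -/
theorem mass_eq_of_head?_ne
    (hsymm : ∀ v w, sim v w → sim w v)
    (htrans : ∀ u v w, sim u v → sim v w → sim u w)
    (hmain : ∀ v w, sim v w → v.head? ≠ w.head? → ¬ sim v.dropLast w.dropLast →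
      ∀ wt, sim v wt → mass m v = mass m wt)
    {w wt v : List A} (hwt : sim w wt) (hpar : ¬ sim w.dropLast wt.dropLast)
    (hhead : w.head? = wt.head?) (hv : sim w v) (hvhead : v.head? ≠ w.head?) :
    mass m w = mass m v := by
  by_cases hpar' : sim w.dropLast v.dropLast
  · exact (hmain v wt (htrans _ _ _ (hsymm _ _ hv) hwt) (hhead ▸ hvhead)
      (fun h ↦ hpar (htrans _ _ _ hpar' h)) w (hsymm _ _ hv)).symm
  · exact hmain w v hv (Ne.symm hvhead) hpar' v hv

theorem massConstOnClass_or_parentsSimOnClass_cons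
    (hsymm : ∀ v w, sim v w → sim w v)
    (htrans : ∀ u v w, sim u v → sim v w → sim u w)
    (hlen : ∀ v w, sim v w → v.length = w.length)
    (hself : ∀ (u a b : List A), sim (u ++ a) (u ++ b) ↔ sim a b)
    (hmain : ∀ v w, sim v w → v.head? ≠ w.head? → ¬ sim v.dropLast w.dropLast →
      ∀ wt, sim v wt → mass m v = mass m wt)
    (a : A) {u : List A} (ih : MassConstOnClass m sim u ∨ ParentsSimOnClass sim u) :
    MassConstOnClass m sim (a :: u) ∨ ParentsSimOnClass sim (a :: u) := by
  by_cases hpar : ParentsSimOnClass sim (a :: u)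
  · exact .inr hpar
  left
  obtain ⟨wt, hwt, hpar⟩ : ∃ wt, sim (a :: u) wt ∧ ¬ sim (a :: u).dropLast wt.dropLast := by
    simpa [ParentsSimOnClass] using hpar
  by_cases hhead : (a :: u).head? = wt.head?
  swap
  · exact hmain _ _ hwt hhead hpar
  obtain ⟨u', rfl⟩ : ∃ u', wt = a :: u' := by
    cases wt <;> simp_all
  have hu : sim u u' := (hself [a] u u').mp hwt
  have hu_par : ¬ sim u.dropLast u'.dropLast :=
    (sim_dropLast_cons_iff hself a (hlen _ _ hu)).not.mp hpar
  have hu_mass : MassConstOnClass m sim u := ih.resolve_right fun h ↦ hu_par (h u' hu)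
  intro v hv
  by_cases hvhead : v.head? = (a :: u).head?
  · obtain ⟨v', rfl⟩ : ∃ v', v = a :: v' := by
      cases v <;> simp_all
    exact mass_cons_eq_of_massConstOnClass hself hu_mass hv
  · exact mass_eq_of_head?_ne hsymm htrans hmain hwt hpar hhead hv hvhead

end WordEquivalence

theorem stmt2_general {A : Type*} (m : A → ℝ) (sim : List A → List A → Prop)
    (hsymm : ∀ v w, sim v w → sim w v)
    (htrans : ∀ u v w, sim u v → sim v w → sim u w)
    (hlen : ∀ v w, sim v w → v.length = w.length)
    (hself : ∀ (u a b : List A), sim (u ++ a) (u ++ b) ↔ sim a b)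
    (hmain : ∀ v w, sim v w → v.head? ≠ w.head? → ¬ sim v.dropLast w.dropLast →
      ∀ wt, sim v wt → mass m v = mass m wt) :
    ∀ w, (∀ wt, sim w wt → mass m w = mass m wt) ∨
         (∀ wt, sim w wt → sim w.dropLast wt.dropLast) := by
  intro w
  induction w with
  | nil => exact .inl (massConstOnClass_nil hlen)
  | cons a u ih =>
    exact massConstOnClass_or_parentsSimOnClass_cons hsymm htrans hlen hself hmain a ih

/-- Proposition 3.3: if every pair of equivalent words with different first letters and
non-equivalent parents has all equivalent words of equal mass, and the relation is
self-similar (equivalences of words with a common prefix come from the suffixes),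
then condition (B2) holds for all words. -/
theorem stmt2 {A : Type*} (m : A → ℝ) (sim : List A → List A → Prop)
    (hrefl : ∀ w, sim w w)
    (hsymm : ∀ v w, sim v w → sim w v)
    (htrans : ∀ u v w, sim u v → sim v w → sim u w)
    (hlen : ∀ v w, sim v w → v.length = w.length)
    (hself : ∀ (u a b : List A), sim (u ++ a) (u ++ b) ↔ sim a b)
    (hmain : ∀ v w, sim v w → v.head? ≠ w.head? → ¬ sim v.dropLast w.dropLast →
      ∀ wt, sim v wt → mass m v = mass m wt) :
    ∀ w, (∀ wt, sim w wt → mass m w = mass m wt) ∨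
         (∀ wt, sim w wt → sim w.dropLast wt.dropLast) :=
  stmt2_general m sim hsymm htrans hlen hself hmain
end

section
/- Suppose (m₁,…,m₆) ∈ (0,1)⁶ satisfies m₁m₂ = m₄m₁, m₄m₂ = m₂m₂, m₂m₁ = m₆m₁, m₆m₂ = m₃m₃, m₃m₂ = m₅m₃, m₅m₁ = m₁m₃, m₄m₃ = m₅m₂ = m₆m₃, and m₁ + ⋯ + m₆ = 1. Then m₂ = m₃ = m₄ = m₅ = m₆ = (1 − m₁)/5, and conversely for every choice of m₁ ∈ (0,1) these values give a solution. -/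
/-! Cancelling the positive weight `m₁` gives `m₄ = m₆ = m₂`; then `m₂ ^ 2 = m₃ ^ 2` with both
positive forces `m₃ = m₂`, and cancelling `m₃` gives `m₅ = m₂`. The normalisation
`m₁ + ⋯ + m₆ = 1` then pins the common value to `(1 - m₁) / 5`. -/

lemma masses_eq_of_mass_equations {m₁ m₂ m₃ m₄ m₅ m₆ : ℝ}
    (h₁ : 0 < m₁) (h₂ : 0 < m₂) (h₃ : 0 < m₃)
    (e₁ : m₁ * m₂ = m₄ * m₁) (e₃ : m₂ * m₁ = m₆ * m₁) (e₄ : m₆ * m₂ = m₃ * m₃)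
    (e₅ : m₃ * m₂ = m₅ * m₃) :
    m₃ = m₂ ∧ m₄ = m₂ ∧ m₅ = m₂ ∧ m₆ = m₂ := by
  have h₄ : m₄ = m₂ := mul_right_cancel₀ h₁.ne' (e₁.symm.trans (mul_comm m₁ m₂))
  have h₆ : m₆ = m₂ := (mul_right_cancel₀ h₁.ne' e₃).symm
  have h₃₂ : m₃ = m₂ := by
    rw [h₆] at e₄
    exact ((mul_self_inj h₂.le h₃.le).mp e₄).symm
  have h₅ : m₅ = m₂ := by
    rw [h₃₂] at e₅
    exact (mul_right_cancel₀ h₂.ne' e₅).symm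
  exact ⟨h₃₂, h₄, h₅, h₆⟩

lemma one_sub_div_five_mem_Ioo {m : ℝ} (hm : m ∈ Set.Ioo (0 : ℝ) 1) :
    (1 - m) / 5 ∈ Set.Ioo (0 : ℝ) 1 := by
  obtain ⟨h₀, h₁⟩ := hm
  constructor <;> linarith

/-- Example 5.4: the mass system of the rotated 3-level Sierpinski gasket has exactly
one free parameter: `m₂ = ⋯ = m₆ = (1 - m₁)/5`, and conversely every `m₁ ∈ (0,1)`
yields a solution. -/
theorem stmt12 :
    (∀ m₁ m₂ m₃ m₄ m₅ m₆ : ℝ,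
      m₁ ∈ Set.Ioo (0:ℝ) 1 → m₂ ∈ Set.Ioo (0:ℝ) 1 → m₃ ∈ Set.Ioo (0:ℝ) 1 →
      m₄ ∈ Set.Ioo (0:ℝ) 1 → m₅ ∈ Set.Ioo (0:ℝ) 1 → m₆ ∈ Set.Ioo (0:ℝ) 1 →
      m₁ * m₂ = m₄ * m₁ → m₄ * m₂ = m₂ * m₂ → m₂ * m₁ = m₆ * m₁ →
      m₆ * m₂ = m₃ * m₃ → m₃ * m₂ = m₅ * m₃ → m₅ * m₁ = m₁ * m₃ →
      m₄ * m₃ = m₅ * m₂ → m₅ * m₂ = m₆ * m₃ →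
      m₁ + m₂ + m₃ + m₄ + m₅ + m₆ = 1 →
      m₂ = (1 - m₁) / 5 ∧ m₃ = (1 - m₁) / 5 ∧ m₄ = (1 - m₁) / 5 ∧
      m₅ = (1 - m₁) / 5 ∧ m₆ = (1 - m₁) / 5) ∧
    (∀ m₁ ∈ Set.Ioo (0:ℝ) 1, ∀ t : ℝ, t = (1 - m₁) / 5 →
      t ∈ Set.Ioo (0:ℝ) 1 ∧
      m₁ * t = t * m₁ ∧ t * t = t * t ∧ t * m₁ = t * m₁ ∧
      t * t = t * t ∧ t * t = t * t ∧ t * m₁ = m₁ * t ∧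
      t * t = t * t ∧ t * t = t * t ∧
      m₁ + t + t + t + t + t = 1) := by
  constructor
  · rintro m₁ m₂ m₃ m₄ m₅ m₆ ⟨h₁, -⟩ ⟨h₂, -⟩ ⟨h₃, -⟩ - - - e₁ - e₃ e₄ e₅ - - - hsum
    obtain ⟨h₃₂, h₄, h₅, h₆⟩ := masses_eq_of_mass_equations h₁ h₂ h₃ e₁ e₃ e₄ e₅
    have h₂' : m₂ = (1 - m₁) / 5 := by subst h₃₂ h₄ h₅ h₆; linarith
    exact ⟨h₂', h₃₂.trans h₂', h₄.trans h₂', h₅.trans h₂', h₆.trans h₂'⟩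
  · rintro m₁ hm₁ t rfl
    exact ⟨one_sub_div_five_mem_Ioo hm₁, mul_comm _ _, rfl, rfl, rfl, rfl, mul_comm _ _, rfl,
      rfl, by ring⟩
end
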